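/- arXiv:2603.13407 — 4 statements merged into one kernel-verified Lean document; each statement's English description precedes it below -/
import Mathlib

section
/- Let P, Q be probability measures on a measurable space X and let K be a Markov kernel from X to a measurable space Z. Write P' := PK and Q' := QK for the pushforward measures (the compositions of P and Q with the kernel K). Then for every ε ≥ 0, δ_{Q'‖P'}(ε) ≤ δ_{Q‖P}(ε). -/
open MeasureTheory ProbabilityTheory

/-- The privacy curve of the binary experiment `(P,Q)`:
`δ_{Q‖P}(ε) = sup_{A measurable} (Q(A) − e^ε P(A))`. -/
noncomputable def privCurve {X : Type*} [MeasurableSpace X] (P Q : Measure X) (ε : ℝ) : ℝ :=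
  ⨆ A : {A : Set X // MeasurableSet A}, ((Q A.1).toReal - Real.exp ε * (P A.1).toReal)

/-! With `δ = δ_{Q‖P}(ε)`, the curve is characterised by `Q A ≤ e^ε P A + δ` for all measurable
`A`. For a measurable `B`, `QK(B) = ∫ K(·, B) dQ`, and the layer-cake formula writes this integral
of a `[0, 1]`-valued function as `∫₀¹ Q {K(·, B) > t} dt`. Applying the set-wise bound to each
superlevel set and integrating over `t ∈ (0, 1)` gives `QK(B) ≤ e^ε PK(B) + δ`. -/

open scoped ENNReal

namespace MeasureTheory

variable {α : Type*} [MeasurableSpace α]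

theorem lintegral_le_mul_lintegral_add_of_forall_measure_le {μ ν : Measure α} {c d : ℝ≥0∞}
    (h : ∀ A, MeasurableSet A → ν A ≤ c * μ A + d) {f : α → ℝ≥0∞} (hf : Measurable f)
    (hf_le : ∀ x, f x ≤ 1) :
    ∫⁻ x, f x ∂ν ≤ c * ∫⁻ x, f x ∂μ + d := by
  set g : α → ℝ := fun x ↦ (f x).toReal
  have hg : Measurable g := hf.ennreal_toReal
  have hfg : f = fun x ↦ ENNReal.ofReal (g x) := funext fun x ↦
    (ENNReal.ofReal_toReal (ne_top_of_le_ne_top ENNReal.one_ne_top (hf_le x))).symm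
  have layercake (ρ : Measure α) : ∫⁻ x, f x ∂ρ = ∫⁻ t in Set.Ioi 0, ρ {x | t < g x} := by
    rw [hfg]
    exact lintegral_eq_lintegral_meas_lt ρ (.of_forall fun _ ↦ ENNReal.toReal_nonneg)
      hg.aemeasurable
  -- Above level `1` the superlevel sets are empty, so the slack `d` is only paid on `(0, 1)`.
  have level_le (t : ℝ) :
      ν {x | t < g x} ≤ c * μ {x | t < g x} + (Set.Iio 1).indicator (fun _ ↦ d) t := by
    by_cases ht : t < 1
    · rw [Set.indicator_of_mem (Set.mem_Iio.2 ht)]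
      exact h _ (measurableSet_lt measurable_const hg)
    · have hempty : {x | t < g x} = ∅ := Set.eq_empty_of_forall_notMem fun x hx ↦
        ht (lt_of_lt_of_le hx (ENNReal.toReal_le_of_le_ofReal zero_le_one (by simpa using hf_le x)))
      simp [hempty]
  calc ∫⁻ x, f x ∂ν
      ≤ ∫⁻ t in Set.Ioi 0, (c * μ {x | t < g x} + (Set.Iio 1).indicator (fun _ ↦ d) t) := by
        rw [layercake]; exact lintegral_mono level_le
    _ = c * ∫⁻ x, f x ∂μ + d := by
        rw [lintegral_add_right _ (measurable_const.indicator measurableSet_Iio),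
          lintegral_const_mul c (Antitone.measurable (f := fun t ↦ μ {x | t < g x})
            fun s t hst ↦ measure_mono fun x hx ↦ lt_of_le_of_lt hst hx),
          lintegral_indicator_const measurableSet_Iio,
          Measure.restrict_apply measurableSet_Iio, layercake]
        simp [Set.Iio_inter_Ioi, Real.volume_Ioo]

variable {β : Type*} [MeasurableSpace β]

theorem Measure.bind_apply_le_mul_add_of_forall_measure_le {μ ν : Measure α} {c d : ℝ≥0∞}
    (h : ∀ A, MeasurableSet A → ν A ≤ c * μ A + d) (K : Kernel α β) [IsZeroOrMarkovKernel K]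
    {B : Set β} (hB : MeasurableSet B) :
    ν.bind K B ≤ c * μ.bind K B + d := by
  simp only [Measure.bind_apply hB K.aemeasurable]
  exact lintegral_le_mul_lintegral_add_of_forall_measure_le h (K.measurable_coe hB)
    fun _ ↦ prob_le_one

end MeasureTheory

section PrivCurve

variable {X : Type*} [MeasurableSpace X] (P Q : Measure X) (ε : ℝ)

theorem bddAbove_privCurve_range [IsFiniteMeasure Q] :
    BddAbove (Set.range fun A : {A : Set X // MeasurableSet A} ↦
      (Q A.1).toReal - Real.exp ε * (P A.1).toReal) := by
  refine ⟨(Q Set.univ).toReal, ?_⟩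
  rintro _ ⟨A, rfl⟩
  have hQ : (Q A.1).toReal ≤ (Q Set.univ).toReal :=
    ENNReal.toReal_mono (measure_ne_top Q _) (measure_mono (Set.subset_univ _))
  have hP : 0 ≤ Real.exp ε * (P A.1).toReal := by positivity
  dsimp only
  linarith

theorem sub_le_privCurve [IsFiniteMeasure Q] {A : Set X} (hA : MeasurableSet A) :
    (Q A).toReal - Real.exp ε * (P A).toReal ≤ privCurve P Q ε :=
  le_ciSup (bddAbove_privCurve_range P Q ε) ⟨A, hA⟩

theorem privCurve_nonneg [IsFiniteMeasure Q] : 0 ≤ privCurve P Q ε := by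
  simpa using sub_le_privCurve P Q ε MeasurableSet.empty

theorem measure_le_exp_mul_add_privCurve [IsFiniteMeasure P] [IsFiniteMeasure Q] {A : Set X}
    (hA : MeasurableSet A) :
    Q A ≤ ENNReal.ofReal (Real.exp ε) * P A + ENNReal.ofReal (privCurve P Q ε) :=
  calc Q A = ENNReal.ofReal (Q A).toReal := (ENNReal.ofReal_toReal (measure_ne_top Q A)).symm
    _ ≤ ENNReal.ofReal (Real.exp ε * (P A).toReal + privCurve P Q ε) :=
        ENNReal.ofReal_le_ofReal (by linarith [sub_le_privCurve P Q ε hA])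
    _ = ENNReal.ofReal (Real.exp ε) * P A + ENNReal.ofReal (privCurve P Q ε) := by
        rw [ENNReal.ofReal_add (by positivity) (privCurve_nonneg P Q ε),
          ENNReal.ofReal_mul (Real.exp_nonneg ε), ENNReal.ofReal_toReal (measure_ne_top P A)]

theorem privCurve_le_of_forall_measure_le [IsFiniteMeasure P] {δ : ℝ} (hδ : 0 ≤ δ)
    (h : ∀ A, MeasurableSet A → Q A ≤ ENNReal.ofReal (Real.exp ε) * P A + ENNReal.ofReal δ) :
    privCurve P Q ε ≤ δ := by
  refine ciSup_le fun ⟨A, hA⟩ ↦ sub_le_iff_le_add'.2 ?_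
  have hQA := ENNReal.toReal_mono (by finiteness) (h A hA)
  rwa [ENNReal.toReal_add (by finiteness) ENNReal.ofReal_ne_top, ENNReal.toReal_mul,
    ENNReal.toReal_ofReal (Real.exp_nonneg ε), ENNReal.toReal_ofReal hδ] at hQA

end PrivCurve

theorem privacy_curve_dpi_general
    {X Z : Type*} [MeasurableSpace X] [MeasurableSpace Z]
    (P Q : Measure X) [IsProbabilityMeasure P] [IsProbabilityMeasure Q]
    (K : Kernel X Z) [IsMarkovKernel K]
    (ε : ℝ) :
    privCurve (P.bind K) (Q.bind K) ε ≤ privCurve P Q ε :=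
  privCurve_le_of_forall_measure_le _ _ ε (privCurve_nonneg P Q ε) fun _ hB ↦
    Measure.bind_apply_le_mul_add_of_forall_measure_le
      (fun _ hA ↦ measure_le_exp_mul_add_privCurve P Q ε hA) K hB

/-- Data processing inequality for privacy curves: if `K` is a Markov kernel from `X`
to `Z` and `P' = PK`, `Q' = QK` are the compositions, then
`δ_{Q'‖P'}(ε) ≤ δ_{Q‖P}(ε)` for every `ε ≥ 0`. -/
theorem privacy_curve_dpi
    {X Z : Type*} [MeasurableSpace X] [MeasurableSpace Z]
    (P Q : Measure X) [IsProbabilityMeasure P] [IsProbabilityMeasure Q]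
    (K : Kernel X Z) [IsMarkovKernel K]
    (ε : ℝ) (hε : 0 ≤ ε) :
    privCurve (P.bind K) (Q.bind K) ε ≤ privCurve P Q ε :=
  privacy_curve_dpi_general P Q K ε
end

section
/- Let P, Q be probability measures on a measurable space X and let R be any probability measure on a measurable space Z. Then for every ε ≥ 0, δ_{Q⊗R ‖ P⊗R}(ε) = δ_{Q‖P}(ε). -/
open MeasureTheory

/-!
The marginal of `P ⊗ R` on `X` is `P`, so `δ_{Q‖P} ≤ δ_{Q⊗R‖P⊗R}` by data processing along the
projection. Conversely, the loss `(Q⊗R)(B) - e^ε (P⊗R)(B)` of a measurable `B ⊆ X × Z` is the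
`R`-average of the losses of its slices `B_z ⊆ X`, each of which is at most `δ_{Q‖P}(ε)`.
-/

section PrivCurve

variable {X Y : Type*} [MeasurableSpace X] [MeasurableSpace Y]

lemma privCurve_bddAbove (P Q : Measure X) [IsFiniteMeasure Q] (ε : ℝ) :
    BddAbove (Set.range fun A : {A : Set X // MeasurableSet A} =>
      (Q A.1).toReal - Real.exp ε * (P A.1).toReal) := by
  refine ⟨Q.real Set.univ, ?_⟩
  rintro _ ⟨A, rfl⟩
  have hQ : Q.real A.1 ≤ Q.real Set.univ := measureReal_mono (Set.subset_univ _)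
  have hP : 0 ≤ Real.exp ε * P.real A.1 := by positivity
  simp only [← measureReal_def]
  linarith

lemma le_privCurve (P Q : Measure X) [IsFiniteMeasure Q] (ε : ℝ) {A : Set X}
    (hA : MeasurableSet A) : Q.real A - Real.exp ε * P.real A ≤ privCurve P Q ε :=
  le_ciSup (privCurve_bddAbove P Q ε) ⟨A, hA⟩

lemma privCurve_le {P Q : Measure X} {ε c : ℝ}
    (h : ∀ A, MeasurableSet A → Q.real A - Real.exp ε * P.real A ≤ c) : privCurve P Q ε ≤ c :=
  ciSup_le fun A => h A.1 A.2

lemma privCurve_map_le (P Q : Measure X) [IsFiniteMeasure Q] {f : X → Y} (hf : Measurable f)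
    (ε : ℝ) : privCurve (P.map f) (Q.map f) ε ≤ privCurve P Q ε :=
  privCurve_le fun B hB => by
    rw [map_measureReal_apply hf hB, map_measureReal_apply hf hB]
    exact le_privCurve P Q ε (hf hB)

lemma measureReal_prod_apply_symm (μ : Measure X) (ν : Measure Y) [IsFiniteMeasure μ]
    [IsFiniteMeasure ν] {s : Set (X × Y)} (hs : MeasurableSet s) :
    (μ.prod ν).real s = ∫ y, μ.real ((fun x => (x, y)) ⁻¹' s) ∂ν := by
  rw [measureReal_def, Measure.prod_apply_symm hs,
    ← integral_toReal (measurable_measure_prodMk_right hs).aemeasurable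
      (ae_of_all _ fun _ => measure_lt_top _ _)]
  rfl

lemma integrable_measureReal_prodMk_right (μ : Measure X) (ν : Measure Y) [IsFiniteMeasure μ]
    [IsFiniteMeasure ν] {s : Set (X × Y)} (hs : MeasurableSet s) :
    Integrable (fun y => μ.real ((fun x => (x, y)) ⁻¹' s)) ν := by
  refine .of_bound (measurable_measure_prodMk_right hs).ennreal_toReal.aestronglyMeasurable
    (μ.real Set.univ) (ae_of_all _ fun y => ?_)
  rw [Real.norm_of_nonneg measureReal_nonneg]
  exact measureReal_mono (Set.subset_univ _)

lemma privCurve_prod_le (P Q : Measure X) (R : Measure Y) [IsFiniteMeasure P] [IsFiniteMeasure Q]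
    [IsProbabilityMeasure R] (ε : ℝ) :
    privCurve (P.prod R) (Q.prod R) ε ≤ privCurve P Q ε :=
  privCurve_le fun B hB => by
    set slice : Y → Set X := fun y => (fun x => (x, y)) ⁻¹' B
    have hQ := integrable_measureReal_prodMk_right Q R hB
    have hP := (integrable_measureReal_prodMk_right P R hB).const_mul (Real.exp ε)
    rw [measureReal_prod_apply_symm Q R hB, measureReal_prod_apply_symm P R hB,
      ← integral_const_mul, ← integral_sub hQ hP]
    calc ∫ y, (Q.real (slice y) - Real.exp ε * P.real (slice y)) ∂ R
        ≤ ∫ _, privCurve P Q ε ∂ R :=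
          integral_mono (hQ.sub hP) (integrable_const _)
            fun y => le_privCurve P Q ε (measurable_prodMk_right hB)
      _ = privCurve P Q ε := by simp

end PrivCurve

theorem privacy_curve_common_independent_factor_general
    {X Z : Type*} [MeasurableSpace X] [MeasurableSpace Z]
    (P Q : Measure X) (R : Measure Z)
    [IsProbabilityMeasure P] [IsProbabilityMeasure Q] [IsProbabilityMeasure R]
    (ε : ℝ) :
    privCurve (P.prod R) (Q.prod R) ε = privCurve P Q ε := by
  refine le_antisymm (privCurve_prod_le P Q R ε) ?_
  simpa using privCurve_map_le (P.prod R) (Q.prod R) measurable_fst ε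

/-- A common independent factor does not affect privacy curves:
`δ_{Q⊗R ‖ P⊗R}(ε) = δ_{Q‖P}(ε)` for any probability measure `R` and every `ε ≥ 0`. -/
theorem privacy_curve_common_independent_factor
    {X Z : Type*} [MeasurableSpace X] [MeasurableSpace Z]
    (P Q : Measure X) (R : Measure Z)
    [IsProbabilityMeasure P] [IsProbabilityMeasure Q] [IsProbabilityMeasure R]
    (ε : ℝ) (hε : 0 ≤ ε) :
    privCurve (P.prod R) (Q.prod R) ε = privCurve P Q ε :=
  privacy_curve_common_independent_factor_general P Q R ε
end

section
/- Let 𝒴 be a finite set, D₀, D₁ ⊆ 𝒴 nonempty, M_b := {x ∈ ℝ^𝒴 : supp(x) ⊆ D_b and Σ_{y∈D_b} x(y) = 0}, M := M₀ + M₁, and Π_J the orthogonal projection of ℝ^𝒴 onto M^⊥. For b ∈ {0,1} let p_b be a probability vector supported on D_b with p_b(y) > 0 for all y ∈ D_b, set μ_b := Σ_{y∈D_b} p_b(y) e_y and m_b := Π_J μ_b. Then: (a) if D₀ ∩ D₁ = ∅, then m₀ ≠ m₁; (b) if D₀ ∩ D₁ ≠ ∅, then m₀ = m₁, and therefore Δ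 := Π_J(μ₁ − μ₀) = 0. -/
open Finset

/-- The dominant tangent subspace `M_D = {x : supp(x) ⊆ D, Σ_{y∈D} x(y) = 0}`
inside the Euclidean space `ℝ^𝒴`. -/
noncomputable def tangent {Y : Type*} [Fintype Y] [DecidableEq Y] (D : Finset Y) :
    Submodule ℝ (EuclideanSpace ℝ Y) where
  carrier := {x | (∀ y ∉ D, x y = 0) ∧ ∑ y ∈ D, x y = 0}
  add_mem' := by
    rintro a b ⟨ha1, ha2⟩ ⟨hb1, hb2⟩
    refine ⟨fun y hy => ?_, ?_⟩
    · show a y + b y = 0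
      rw [ha1 y hy, hb1 y hy, add_zero]
    · show ∑ y ∈ D, (a y + b y) = 0
      rw [Finset.sum_add_distrib, ha2, hb2, add_zero]
  zero_mem' := ⟨fun y _ => rfl, by simp⟩
  smul_mem' := by
    rintro c a ⟨ha1, ha2⟩
    refine ⟨fun y hy => ?_, ?_⟩
    · show c * a y = 0
      rw [ha1 y hy, mul_zero]
    · show ∑ y ∈ D, c * a y = 0
      rw [← Finset.mul_sum, ha2, mul_zero]

/-- The quotient projection `Π_J`: orthogonal projection of `ℝ^𝒴` onto `M^⊥`,
where `M = M_{D₀} + M_{D₁}` is the dominant tangent space. -/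
noncomputable def PiJ {Y : Type*} [Fintype Y] [DecidableEq Y] (D₀ D₁ : Finset Y) :
    EuclideanSpace ℝ Y → EuclideanSpace ℝ Y :=
  fun x => (Submodule.orthogonalProjection (tangent D₀ + tangent D₁)ᗮ x : EuclideanSpace ℝ Y)

/-
Both `Π_J μ_b` agree iff `μ₀ - μ₁ ∈ M₀ + M₁`. A common point `y₀ ∈ D₀ ∩ D₁` gives
`μ_b - e_{y₀} ∈ M_b` for both `b`, hence `μ₀ - μ₁ ∈ M`. When `D₀` and `D₁` are disjoint, the
linear form `x ↦ Σ_{y ∈ D₀} x(y)` vanishes on `M₀` and on `M₁` but equals `1` at `μ₀ - μ₁`.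
-/

section

variable {Y : Type*} [DecidableEq Y]

lemma sum_smul_single_one_apply (D : Finset Y) (p : Y → ℝ) (z : Y) :
    (∑ y ∈ D, p y • EuclideanSpace.single y (1 : ℝ)) z = if z ∈ D then p z else 0 := by
  simp [Pi.single_apply]

lemma sum_sum_smul_single_one_apply (D D' : Finset Y) (p : Y → ℝ) :
    ∑ z ∈ D', (∑ y ∈ D, p y • EuclideanSpace.single y (1 : ℝ)) z = ∑ z ∈ D' ∩ D, p z := by
  simp_rw [sum_smul_single_one_apply, ← sum_filter, filter_mem_eq_inter]

variable [Fintype Y]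

lemma sum_smul_single_one_sub_single_mem_tangent {D : Finset Y} {p : Y → ℝ}
    (hp : ∑ y ∈ D, p y = 1) {y₀ : Y} (hy₀ : y₀ ∈ D) :
    (∑ y ∈ D, p y • EuclideanSpace.single y (1 : ℝ)) - EuclideanSpace.single y₀ 1 ∈ tangent D := by
  refine ⟨fun y hy => ?_, ?_⟩
  · have hne : y ≠ y₀ := by rintro rfl; exact hy hy₀
    simp [sum_smul_single_one_apply, hy, hne]
  · simp only [PiLp.sub_apply, sum_sub_distrib, sum_sum_smul_single_one_apply, inter_self, hp,
      PiLp.single_apply, sum_ite_eq', hy₀, if_true, sub_self]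

lemma sum_apply_eq_zero_of_mem_tangent_sup {D₀ D₁ : Finset Y} (h : Disjoint D₀ D₁)
    {x : EuclideanSpace ℝ Y} (hx : x ∈ tangent D₀ ⊔ tangent D₁) : ∑ y ∈ D₀, x y = 0 := by
  obtain ⟨a, ha, b, hb, rfl⟩ := Submodule.mem_sup.1 hx
  have hb_zero : ∀ y ∈ D₀, b y = 0 := fun y hy => hb.1 y (disjoint_left.1 h hy)
  simp only [PiLp.add_apply, sum_add_distrib, ha.2, sum_eq_zero hb_zero, add_zero]

lemma PiJ_sub (D₀ D₁ : Finset Y) (u v : EuclideanSpace ℝ Y) :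
    PiJ D₀ D₁ (u - v) = PiJ D₀ D₁ u - PiJ D₀ D₁ v := by
  simp [PiJ]

lemma PiJ_eq_zero_iff (D₀ D₁ : Finset Y) (v : EuclideanSpace ℝ Y) :
    PiJ D₀ D₁ v = 0 ↔ v ∈ tangent D₀ ⊔ tangent D₁ := by
  rw [PiJ, Submodule.coe_eq_zero, Submodule.orthogonalProjectionOnto_eq_zero_iff,
    Submodule.orthogonal_orthogonal, Submodule.add_eq_sup]

lemma PiJ_eq_PiJ_iff (D₀ D₁ : Finset Y) (u v : EuclideanSpace ℝ Y) :
    PiJ D₀ D₁ u = PiJ D₀ D₁ v ↔ u - v ∈ tangent D₀ ⊔ tangent D₁ := by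
  rw [← PiJ_eq_zero_iff, PiJ_sub, sub_eq_zero]

end

theorem dominant_quotient_atoms_general
    {Y : Type*} [Fintype Y] [DecidableEq Y]
    (D : Fin 2 → Finset Y)
    (p : Fin 2 → Y → ℝ)
    (hp_sum : ∀ b, ∑ y ∈ D b, p b y = 1) :
    (Disjoint (D 0) (D 1) →
      PiJ (D 0) (D 1) (∑ y ∈ D 0, p 0 y • EuclideanSpace.single y 1) ≠
        PiJ (D 0) (D 1) (∑ y ∈ D 1, p 1 y • EuclideanSpace.single y 1)) ∧
    ((D 0 ∩ D 1).Nonempty →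
      PiJ (D 0) (D 1) (∑ y ∈ D 0, p 0 y • EuclideanSpace.single y 1) =
        PiJ (D 0) (D 1) (∑ y ∈ D 1, p 1 y • EuclideanSpace.single y 1) ∧
      PiJ (D 0) (D 1)
          ((∑ y ∈ D 1, p 1 y • EuclideanSpace.single y 1) -
            ∑ y ∈ D 0, p 0 y • EuclideanSpace.single y 1) = 0) := by
  refine ⟨fun hdisj heq => ?_, fun ⟨y₀, hy₀⟩ => ?_⟩
  · have hzero := sum_apply_eq_zero_of_mem_tangent_sup hdisj ((PiJ_eq_PiJ_iff _ _ _ _).1 heq)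
    simp only [PiLp.sub_apply, sum_sub_distrib, sum_sum_smul_single_one_apply, inter_self,
      disjoint_iff_inter_eq_empty.1 hdisj, sum_empty, hp_sum, sub_zero] at hzero
    exact one_ne_zero hzero
  · obtain ⟨hy₀0, hy₀1⟩ := mem_inter.1 hy₀
    have hmem := Submodule.sub_mem _
      (Submodule.mem_sup_left (sum_smul_single_one_sub_single_mem_tangent (hp_sum 0) hy₀0))
      (Submodule.mem_sup_right (sum_smul_single_one_sub_single_mem_tangent (hp_sum 1) hy₀1))
    rw [sub_sub_sub_cancel_right] at hmem
    have heq := (PiJ_eq_PiJ_iff _ _ _ _).2 hmem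
    exact ⟨heq, by rw [PiJ_sub, heq, sub_self]⟩

/-- Dominant quotient atoms: disjointness and overlap. With
`μ_b = Σ_{y∈D_b} p_b(y) e_y` and `m_b = Π_J μ_b`:
(a) if `D₀ ∩ D₁ = ∅` then `m₀ ≠ m₁`;
(b) if `D₀ ∩ D₁ ≠ ∅` then `m₀ = m₁` and hence `Δ = Π_J(μ₁ − μ₀) = 0`. -/
theorem dominant_quotient_atoms
    {Y : Type*} [Fintype Y] [DecidableEq Y]
    (D : Fin 2 → Finset Y) (hD : ∀ b, (D b).Nonempty)
    (p : Fin 2 → Y → ℝ)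
    (hp_pos : ∀ b, ∀ y ∈ D b, 0 < p b y)
    (hp_supp : ∀ b, ∀ y ∉ D b, p b y = 0)
    (hp_sum : ∀ b, ∑ y ∈ D b, p b y = 1) :
    (Disjoint (D 0) (D 1) →
      PiJ (D 0) (D 1) (∑ y ∈ D 0, p 0 y • EuclideanSpace.single y 1) ≠
        PiJ (D 0) (D 1) (∑ y ∈ D 1, p 1 y • EuclideanSpace.single y 1)) ∧
    ((D 0 ∩ D 1).Nonempty →
      PiJ (D 0) (D 1) (∑ y ∈ D 0, p 0 y • EuclideanSpace.single y 1) =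
        PiJ (D 0) (D 1) (∑ y ∈ D 1, p 1 y • EuclideanSpace.single y 1) ∧
      PiJ (D 0) (D 1)
          ((∑ y ∈ D 1, p 1 y • EuclideanSpace.single y 1) -
            ∑ y ∈ D 0, p 0 y • EuclideanSpace.single y 1) = 0) :=
  dominant_quotient_atoms_general D p hp_sum
end

section
/- Let D be a finite set and ϑ a probability vector on D with ϑ_min := min_{y∈D} ϑ(y) > 0, and let S_m ~ Multinomial(m, ϑ), i.e., S_m is the histogram Σ_{i=1}^m e_{Y_i} of m i.i.d. D-valued random variables with law ϑ. Then there exists a finite constant C = C(ϑ) such that: (1) for every a, b ∈ D, TV(law(S_m + e_a), law(S_m + e_b)) ≤ C/√(m+1); and (2) for every r ≥ 1 and deterministic a₁,…,a_r, b₁,…,b_r ∈ D, TV(law(S_m + Σ_{j=1}^r e_{a_j}), law(S_m + Σ_{j=1}^r e_{b_j})) ≤ C·r/√(m+1). The constant C depends only on ϑ, not on m, r, or the chosen categories. -/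
set_option linter.unusedSectionVars false


open MeasureTheory

/-- Total variation distance between two measures:
`TV(μ,ν) = sup_{A measurable} |μ(A) − ν(A)|`. -/
noncomputable def tvDist {X : Type*} [MeasurableSpace X] (μ ν : Measure X) : ℝ :=
  ⨆ A : {A : Set X // MeasurableSet A}, |(μ A.1).toReal - (ν A.1).toReal|

/-- The discrete measure on a finite type with weight vector `w`. -/
noncomputable def discMeasure {D : Type*} [Fintype D] [MeasurableSpace D] (w : D → ℝ) :
    Measure D :=
  ∑ y, (ENNReal.ofReal (w y)) • Measure.dirac y

/-- The multinomial law `Multinomial(m, ϑ)` on `ℕ^D`: the law of the histogram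
`S_m = Σ_{i=1}^m e_{Y_i}` of `m` i.i.d. `D`-valued variables with law `ϑ`. -/
noncomputable def multinomialLaw {D : Type*} [Fintype D] [DecidableEq D]
    [MeasurableSpace D] (m : ℕ) (ϑ : D → ℝ) : Measure (D → ℕ) :=
  Measure.map (fun ω : Fin m → D => ∑ i, Pi.single (ω i) 1)
    (Measure.pi fun _ : Fin m => discMeasure ϑ)



namespace MultiAux

variable {D : Type*} [Fintype D] [DecidableEq D]

/-- real weight of a word -/
def mw (ϑ : D → ℝ) {n : ℕ} (ω : Fin n → D) : ℝ := ∏ i, ϑ (ω i)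

/-- histogram of a word -/
def hist {n : ℕ} (ω : Fin n → D) : D → ℕ := ∑ i, Pi.single (ω i) 1

/-- indicator -/
def eC (c y : D) : ℝ := if c = y then 1 else 0

lemma eC_nonneg (c y : D) : 0 ≤ eC c y := by unfold eC; positivity

lemma hist_apply {n : ℕ} (ω : Fin n → D) (c : D) :
    ((hist ω c : ℕ) : ℝ) = ∑ i, eC c (ω i) := by
  unfold hist eC
  push_cast [Finset.sum_apply, Pi.single_apply]
  exact Finset.sum_congr rfl fun i _ => by split <;> simp

lemma sum_prod_eval {n : ℕ} (g : Fin n → D → ℝ) :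
    ∑ ω : Fin n → D, ∏ j, g j (ω j) = ∏ j, ∑ y, g j y := by
  rw [Finset.prod_univ_sum]
  exact (Finset.sum_congr (by rw [Fintype.piFinset_univ]) fun _ _ => rfl).symm

variable {ϑ : D → ℝ}

lemma mw_nonneg (h_nonneg : ∀ y, 0 ≤ ϑ y) {n : ℕ} (ω : Fin n → D) : 0 ≤ mw ϑ ω :=
  Finset.prod_nonneg fun i _ => h_nonneg _

lemma M0 (h_sum : ∑ y, ϑ y = 1) {n : ℕ} : ∑ ω : Fin n → D, mw ϑ ω = 1 := by
  have := sum_prod_eval (n := n) (fun _ y => ϑ y)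
  unfold mw
  rw [this]
  simp [h_sum]

lemma L1 (h_sum : ∑ y, ϑ y = 1) {n : ℕ} (c : D) (i : Fin n) :
    ∑ ω : Fin n → D, mw ϑ ω * eC c (ω i) = ϑ c := by
  set g : Fin n → D → ℝ := fun j y => ϑ y * if j = i then eC c y else 1 with hg
  have h1 : ∀ ω : Fin n → D, mw ϑ ω * eC c (ω i) = ∏ j, g j (ω j) := by
    intro ω
    simp only [hg, Finset.prod_mul_distrib]
    unfold mw
    congr 1
    simp [Finset.prod_ite_eq']
  calc ∑ ω : Fin n → D, mw ϑ ω * eC c (ω i) = ∑ ω : Fin n → D, ∏ j, g j (ω j) :=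
        Finset.sum_congr rfl fun ω _ => h1 ω
    _ = ∏ j, ∑ y, g j y := sum_prod_eval g
    _ = ϑ c := by
        have h2 : ∀ j : Fin n, (∑ y, g j y) = if j = i then ϑ c else 1 := by
          intro j
          by_cases h : j = i <;> simp [hg, h, eC, mul_ite, h_sum, Finset.sum_ite_eq]
        rw [Finset.prod_congr rfl fun j _ => h2 j]
        simp [Finset.prod_ite_eq']

lemma L2 (h_sum : ∑ y, ϑ y = 1) {n : ℕ} (c : D) {i j : Fin n} (hij : i ≠ j) :
    ∑ ω : Fin n → D, mw ϑ ω * eC c (ω i) * eC c (ω j) = ϑ c ^ 2 := by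
  set g : Fin n → D → ℝ := fun k y =>
    ϑ y * (if k = i then eC c y else 1) * (if k = j then eC c y else 1) with hg
  have h1 : ∀ ω : Fin n → D, mw ϑ ω * eC c (ω i) * eC c (ω j) = ∏ k, g k (ω k) := by
    intro ω
    simp only [hg, Finset.prod_mul_distrib]
    unfold mw
    congr 2
    · simp [Finset.prod_ite_eq']
    · simp [Finset.prod_ite_eq']
  calc ∑ ω : Fin n → D, mw ϑ ω * eC c (ω i) * eC c (ω j)
      = ∑ ω : Fin n → D, ∏ k, g k (ω k) := Finset.sum_congr rfl fun ω _ => h1 ω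
    _ = ∏ k, ∑ y, g k y := sum_prod_eval g
    _ = ϑ c ^ 2 := by
        have h2 : ∀ k : Fin n, (∑ y, g k y)
            = (if k = i then ϑ c else 1) * (if k = j then ϑ c else 1) := by
          intro k
          by_cases hk1 : k = i <;> by_cases hk2 : k = j
          · exact absurd (hk1 ▸ hk2) hij
          · simp [hg, hk1, hk2, eC, mul_ite, h_sum, Finset.sum_ite_eq, hij, Ne.symm hij]
          · simp [hg, hk1, hk2, eC, mul_ite, h_sum, Finset.sum_ite_eq, hij, Ne.symm hij]
          · simp [hg, hk1, hk2, h_sum]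
        rw [Finset.prod_congr rfl fun k _ => h2 k, Finset.prod_mul_distrib]
        simp [Finset.prod_ite_eq', sq]

lemma M1 (h_sum : ∑ y, ϑ y = 1) {n : ℕ} (c : D) :
    ∑ ω : Fin n → D, mw ϑ ω * ((hist ω c : ℕ) : ℝ) = n * ϑ c := by
  have h1 : ∀ ω : Fin n → D, mw ϑ ω * ((hist ω c : ℕ) : ℝ)
      = ∑ i, mw ϑ ω * eC c (ω i) := by
    intro ω; rw [hist_apply, Finset.mul_sum]
  rw [Finset.sum_congr rfl fun ω _ => h1 ω, Finset.sum_comm]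
  rw [Finset.sum_congr rfl fun i _ => L1 h_sum c i]
  simp [mul_comm]

lemma M2 (h_sum : ∑ y, ϑ y = 1) {n : ℕ} (c : D) :
    ∑ ω : Fin n → D, mw ϑ ω * ((hist ω c : ℕ) : ℝ) ^ 2
      = n * ϑ c + ((n : ℝ) ^ 2 - n) * ϑ c ^ 2 := by
  have h1 : ∀ ω : Fin n → D, mw ϑ ω * ((hist ω c : ℕ) : ℝ) ^ 2
      = ∑ i, ∑ j, mw ϑ ω * eC c (ω i) * eC c (ω j) := by
    intro ω
    rw [hist_apply, sq, Finset.sum_mul_sum, Finset.mul_sum]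
    exact Finset.sum_congr rfl fun i _ => by
      rw [Finset.mul_sum]; exact Finset.sum_congr rfl fun j _ => by ring
  rw [Finset.sum_congr rfl fun ω _ => h1 ω, Finset.sum_comm]
  have h2 : ∀ i : Fin n, ∑ ω : Fin n → D, ∑ j, mw ϑ ω * eC c (ω i) * eC c (ω j)
      = ϑ c + ((n : ℝ) - 1) * ϑ c ^ 2 := by
    intro i
    rw [Finset.sum_comm]
    have h3 : ∀ j : Fin n, ∑ ω : Fin n → D, mw ϑ ω * eC c (ω i) * eC c (ω j)
        = ϑ c ^ 2 + if j = i then ϑ c - ϑ c ^ 2 else 0 := by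
      intro j
      by_cases h : j = i
      · subst h
        have h4 : ∀ ω : Fin n → D, mw ϑ ω * eC c (ω j) * eC c (ω j)
            = mw ϑ ω * eC c (ω j) := by
          intro ω; unfold eC; split <;> simp
        rw [Finset.sum_congr rfl fun ω _ => h4 ω, L1 h_sum]
        simp
      · rw [if_neg h, add_zero]
        exact L2 h_sum c fun hh => h hh.symm
    rw [Finset.sum_congr rfl fun j _ => h3 j, Finset.sum_add_distrib,
      Finset.sum_ite_eq' Finset.univ i (fun _ => ϑ c - ϑ c ^ 2)]
    simp only [Finset.sum_const, Finset.card_univ, Fintype.card_fin, nsmul_eq_mul,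
      Finset.mem_univ, if_pos]
    ring
  rw [Finset.sum_congr rfl fun i _ => h2 i]
  simp only [Finset.sum_const, Finset.card_univ, Fintype.card_fin, nsmul_eq_mul]
  ring

end MultiAux

namespace Part2
open MultiAux

variable {D : Type*} [Fintype D] [DecidableEq D] {ϑ : D → ℝ}

lemma mw_insertNth {m : ℕ} (i : Fin (m + 1)) (a : D) (ω : Fin m → D) :
    mw ϑ (i.insertNth a ω) = ϑ a * mw ϑ ω := by
  unfold mw
  rw [Fin.prod_univ_succAbove _ i]
  simp

lemma hist_insertNth {m : ℕ} (i : Fin (m + 1)) (a : D) (ω : Fin m → D) :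
    hist (i.insertNth a ω) = Pi.single a 1 + hist ω := by
  unfold hist
  rw [Fin.sum_univ_succAbove _ i]
  simp

lemma key (h_sum : ∑ y, ϑ y = 1) (m : ℕ) (a : D) (f : (D → ℕ) → ℝ) :
    ((m + 1 : ℕ) : ℝ) * ϑ a * ∑ ω : Fin m → D, mw ϑ ω * f (hist ω)
      = ∑ ω : Fin (m + 1) → D,
          mw ϑ ω * (((hist ω a : ℕ) : ℝ) * f (fun y => hist ω y - (Pi.single a 1 : D → ℕ) y)) := by
  have h1 : ∀ ω : Fin (m + 1) → D,
      mw ϑ ω * (((hist ω a : ℕ) : ℝ) * f (fun y => hist ω y - (Pi.single a 1 : D → ℕ) y))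
        = ∑ i, eC a (ω i) * (mw ϑ ω * f (fun y => hist ω y - (Pi.single a 1 : D → ℕ) y)) := by
    intro ω
    rw [hist_apply, Finset.sum_mul, Finset.mul_sum]
    exact Finset.sum_congr rfl fun i _ => by ring
  rw [Finset.sum_congr rfl fun ω _ => h1 ω, Finset.sum_comm]
  have h2 : ∀ i : Fin (m + 1),
      (∑ ω : Fin (m + 1) → D,
          eC a (ω i) * (mw ϑ ω * f (fun y => hist ω y - (Pi.single a 1 : D → ℕ) y)))
        = ϑ a * ∑ ω : Fin m → D, mw ϑ ω * f (hist ω) := by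
    intro i
    rw [← Equiv.sum_comp (Fin.insertNthEquiv (fun _ => D) i)
      (fun ω => eC a (ω i) * (mw ϑ ω * f (fun y => hist ω y - (Pi.single a 1 : D → ℕ) y)))]
    rw [Fintype.sum_prod_type]
    have h3 : ∀ y : D, ∀ ω : Fin m → D,
        eC a ((Fin.insertNthEquiv (fun _ => D) i (y, ω)) i) *
          (mw ϑ (Fin.insertNthEquiv (fun _ => D) i (y, ω)) *
            f (fun z => hist (Fin.insertNthEquiv (fun _ => D) i (y, ω)) z -
                (Pi.single a 1 : D → ℕ) z))
          = (if a = y then (1:ℝ) else 0) *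
              (ϑ y * mw ϑ ω * f (fun z => ((Pi.single y 1 : D → ℕ) z + hist ω z) - (Pi.single a 1 : D → ℕ) z)) := by
      intro y ω
      have he : (Fin.insertNthEquiv (fun _ => D) i) (y, ω) = i.insertNth y ω := rfl
      rw [he]
      simp only [Fin.insertNth_apply_same, mw_insertNth, hist_insertNth, eC, Pi.add_apply]
    rw [Finset.sum_congr rfl fun y _ => Finset.sum_congr rfl fun ω _ => h3 y ω]
    have h4 : ∀ y : D, (∑ ω : Fin m → D, (if a = y then (1:ℝ) else 0) *
        (ϑ y * mw ϑ ω * f (fun z => ((Pi.single y 1 : D → ℕ) z + hist ω z) - (Pi.single a 1 : D → ℕ) z)))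
        = if a = y then
            (∑ ω : Fin m → D, ϑ y * mw ϑ ω *
              f (fun z => ((Pi.single y 1 : D → ℕ) z + hist ω z) - (Pi.single a 1 : D → ℕ) z)) else 0 := by
      intro y
      split <;> simp
    rw [Finset.sum_congr rfl fun y _ => h4 y, Finset.sum_ite_eq Finset.univ a]
    simp only [Finset.mem_univ, if_pos]
    have h5 : ∀ ω : Fin m → D,
        (fun z => ((Pi.single a 1 : D → ℕ) z + hist ω z) - (Pi.single a 1 : D → ℕ) z) = hist ω := by
      intro ω; funext z; omega
    rw [Finset.sum_congr rfl fun ω _ => by rw [h5 ω]]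
    rw [Finset.mul_sum]
    exact Finset.sum_congr rfl fun ω _ => by ring
  rw [Finset.sum_congr rfl fun i _ => h2 i]
  simp only [Finset.sum_const, Finset.card_univ, Fintype.card_fin, nsmul_eq_mul]
  push_cast
  ring

end Part2

namespace Part3
open MultiAux Part2

variable {D : Type*} [Fintype D] [DecidableEq D] {ϑ : D → ℝ}

/-- indicator of a set -/
noncomputable def ind {X : Type*} (A : Set X) : X → ℝ := A.indicator 1

lemma ind_nonneg {X : Type*} (A : Set X) (x : X) : 0 ≤ ind A x :=
  Set.indicator_nonneg (fun _ _ => zero_le_one) x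

lemma ind_le_one {X : Type*} (A : Set X) (x : X) : ind A x ≤ 1 := by
  unfold ind
  by_cases hx : x ∈ A <;> simp [hx]

/-- deviation bound via Cauchy-Schwarz -/
lemma dev (h_nonneg : ∀ y, 0 ≤ ϑ y) (h_sum : ∑ y, ϑ y = 1) {c : D} (hc : 0 < ϑ c)
    {n : ℕ} (hn : 0 < n) :
    ∑ ω : Fin n → D, mw ϑ ω * |((hist ω c : ℕ) : ℝ) / ((n : ℝ) * ϑ c) - 1|
      ≤ 1 / Real.sqrt ((n : ℝ) * ϑ c) := by
  set A : ℝ := (n : ℝ) * ϑ c with hA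
  have hApos : 0 < A := by positivity
  set z : (Fin n → D) → ℝ := fun ω => ((hist ω c : ℕ) : ℝ) / A - 1 with hz
  have hCS : (∑ ω : Fin n → D, mw ϑ ω * |z ω|) ^ 2
      ≤ (∑ ω : Fin n → D, mw ϑ ω) * (∑ ω : Fin n → D, mw ϑ ω * z ω ^ 2) := by
    have := Finset.sum_mul_sq_le_sq_mul_sq Finset.univ
      (fun ω : Fin n → D => Real.sqrt (mw ϑ ω))
      (fun ω : Fin n → D => Real.sqrt (mw ϑ ω) * |z ω|)
    have e1 : ∀ ω : Fin n → D,
        Real.sqrt (mw ϑ ω) * (Real.sqrt (mw ϑ ω) * |z ω|) = mw ϑ ω * |z ω| := by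
      intro ω
      rw [← mul_assoc, Real.mul_self_sqrt (mw_nonneg h_nonneg ω)]
    have e2 : ∀ ω : Fin n → D, Real.sqrt (mw ϑ ω) ^ 2 = mw ϑ ω := fun ω =>
      Real.sq_sqrt (mw_nonneg h_nonneg ω)
    have e3 : ∀ ω : Fin n → D,
        (Real.sqrt (mw ϑ ω) * |z ω|) ^ 2 = mw ϑ ω * z ω ^ 2 := by
      intro ω
      rw [mul_pow, Real.sq_sqrt (mw_nonneg h_nonneg ω), sq_abs]
    calc (∑ ω : Fin n → D, mw ϑ ω * |z ω|) ^ 2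
        = (∑ ω : Fin n → D, Real.sqrt (mw ϑ ω) * (Real.sqrt (mw ϑ ω) * |z ω|)) ^ 2 := by
          rw [Finset.sum_congr rfl fun ω _ => e1 ω]
      _ ≤ (∑ ω : Fin n → D, Real.sqrt (mw ϑ ω) ^ 2) *
            (∑ ω : Fin n → D, (Real.sqrt (mw ϑ ω) * |z ω|) ^ 2) := this
      _ = (∑ ω : Fin n → D, mw ϑ ω) * (∑ ω : Fin n → D, mw ϑ ω * z ω ^ 2) := by
          rw [Finset.sum_congr rfl fun ω _ => e2 ω, Finset.sum_congr rfl fun ω _ => e3 ω]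
  have hvar : ∑ ω : Fin n → D, mw ϑ ω * z ω ^ 2 ≤ 1 / A := by
    have expand : ∀ ω : Fin n → D, mw ϑ ω * z ω ^ 2
        = mw ϑ ω * ((hist ω c : ℕ) : ℝ) ^ 2 * (1 / A ^ 2)
          - mw ϑ ω * ((hist ω c : ℕ) : ℝ) * (2 / A) + mw ϑ ω := by
      intro ω
      simp only [hz]
      field_simp
      ring
    rw [Finset.sum_congr rfl fun ω _ => expand ω, Finset.sum_add_distrib,
      Finset.sum_sub_distrib, ← Finset.sum_mul, ← Finset.sum_mul,
      M2 h_sum c, M1 h_sum c, M0 h_sum]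
    have hne : ((n : ℝ)) ≠ 0 := by positivity
    have hce : ϑ c ≠ 0 := ne_of_gt hc
    have : ((n : ℝ) * ϑ c + ((n : ℝ) ^ 2 - n) * ϑ c ^ 2) * (1 / A ^ 2)
        - (n : ℝ) * ϑ c * (2 / A) + 1 = 1 / A - 1 / (n : ℝ) := by
      rw [hA]
      field_simp
      ring
    rw [this]
    have : (0:ℝ) ≤ 1 / (n : ℝ) := by positivity
    linarith
  have hfin : (∑ ω : Fin n → D, mw ϑ ω * |z ω|) ^ 2 ≤ 1 / A := by
    calc (∑ ω : Fin n → D, mw ϑ ω * |z ω|) ^ 2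
        ≤ (∑ ω : Fin n → D, mw ϑ ω) * (∑ ω : Fin n → D, mw ϑ ω * z ω ^ 2) := hCS
      _ = ∑ ω : Fin n → D, mw ϑ ω * z ω ^ 2 := by rw [M0 h_sum, one_mul]
      _ ≤ 1 / A := hvar
  have hnonneg : 0 ≤ ∑ ω : Fin n → D, mw ϑ ω * |z ω| :=
    Finset.sum_nonneg fun ω _ => mul_nonneg (mw_nonneg h_nonneg ω) (abs_nonneg _)
  have := (Real.le_sqrt hnonneg (by positivity)).2 hfin
  calc ∑ ω : Fin n → D, mw ϑ ω * |z ω| ≤ Real.sqrt (1 / A) := this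
    _ = 1 / Real.sqrt A := by rw [one_div, one_div, Real.sqrt_inv]

/-- step 2: representation of the shifted sum -/
lemma step2 (h_sum : ∑ y, ϑ y = 1) (m : ℕ) (a : D) (A : Set (D → ℕ)) :
    ((m + 1 : ℕ) : ℝ) * ϑ a *
        ∑ ω : Fin m → D, mw ϑ ω * ind A (hist ω + Pi.single a 1)
      = ∑ ω : Fin (m + 1) → D, mw ϑ ω * (((hist ω a : ℕ) : ℝ) * ind A (hist ω)) := by
  refine (key h_sum m a (fun h => ind A (h + Pi.single a 1))).trans ?_
  refine Finset.sum_congr rfl fun ω _ => ?_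
  by_cases h0 : hist ω a = 0
  · simp [h0]
  · congr 2
    congr 1
    funext y
    by_cases hy : y = a
    · subst hy
      simp only [Pi.add_apply, Pi.single_eq_same]
      omega
    · simp [Pi.single_eq_of_ne hy]

end Part3

namespace Part4
open MultiAux Part2 Part3

variable {D : Type*} [Fintype D] [DecidableEq D] {ϑ : D → ℝ}

lemma core (h_nonneg : ∀ y, 0 ≤ ϑ y) (h_sum : ∑ y, ϑ y = 1) (h_pos : ∀ y, 0 < ϑ y)
    (m : ℕ) (a b : D) (A : Set (D → ℕ)) :
    |(∑ ω : Fin m → D, mw ϑ ω * ind A (hist ω + Pi.single a 1))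
      - ∑ ω : Fin m → D, mw ϑ ω * ind A (hist ω + Pi.single b 1)|
      ≤ 1 / Real.sqrt (((m + 1 : ℕ) : ℝ) * ϑ a)
        + 1 / Real.sqrt (((m + 1 : ℕ) : ℝ) * ϑ b) := by
  have hn1 : (0:ℝ) < ((m + 1 : ℕ) : ℝ) := by positivity
  have repr : ∀ c : D, ∑ ω : Fin m → D, mw ϑ ω * ind A (hist ω + Pi.single c 1)
      = ∑ ω : Fin (m + 1) → D,
          mw ϑ ω * ind A (hist ω) * (((hist ω c : ℕ) : ℝ) / (((m + 1 : ℕ) : ℝ) * ϑ c)) := by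
    intro c
    have hs := step2 h_sum m c A
    have hc := h_pos c
    have hne : ((m + 1 : ℕ) : ℝ) * ϑ c ≠ 0 := by positivity
    have e1 : ∀ ω : Fin (m + 1) → D,
        mw ϑ ω * ind A (hist ω) * (((hist ω c : ℕ) : ℝ) / (((m + 1 : ℕ) : ℝ) * ϑ c))
          = mw ϑ ω * (((hist ω c : ℕ) : ℝ) * ind A (hist ω)) / (((m + 1 : ℕ) : ℝ) * ϑ c) := by
      intro ω; ring
    rw [Finset.sum_congr rfl fun ω _ => e1 ω, ← Finset.sum_div, ← hs]
    field_simp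
  rw [repr a, repr b, ← Finset.sum_sub_distrib]
  have hstep : ∀ ω : Fin (m + 1) → D,
      |mw ϑ ω * ind A (hist ω) * (((hist ω a : ℕ) : ℝ) / (((m + 1 : ℕ) : ℝ) * ϑ a))
        - mw ϑ ω * ind A (hist ω) * (((hist ω b : ℕ) : ℝ) / (((m + 1 : ℕ) : ℝ) * ϑ b))|
      ≤ mw ϑ ω * |((hist ω a : ℕ) : ℝ) / (((m + 1 : ℕ) : ℝ) * ϑ a) - 1|
        + mw ϑ ω * |((hist ω b : ℕ) : ℝ) / (((m + 1 : ℕ) : ℝ) * ϑ b) - 1| := by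
    intro ω
    set X : ℝ := ((hist ω a : ℕ) : ℝ) / (((m + 1 : ℕ) : ℝ) * ϑ a) with hX
    set Y : ℝ := ((hist ω b : ℕ) : ℝ) / (((m + 1 : ℕ) : ℝ) * ϑ b) with hY
    have hmw := mw_nonneg h_nonneg ω
    have hi0 := ind_nonneg A (hist ω)
    have hi1 := ind_le_one A (hist ω)
    have habs : |X - Y| ≤ |X - 1| + |Y - 1| := by
      calc |X - Y| ≤ |X - 1| + |1 - Y| := abs_sub_le X 1 Y
        _ = |X - 1| + |Y - 1| := by rw [abs_sub_comm 1 Y]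
    calc |mw ϑ ω * ind A (hist ω) * X - mw ϑ ω * ind A (hist ω) * Y|
        = mw ϑ ω * ind A (hist ω) * |X - Y| := by
          rw [← mul_sub, abs_mul, abs_of_nonneg (mul_nonneg hmw hi0)]
      _ ≤ mw ϑ ω * 1 * |X - Y| := by
          apply mul_le_mul_of_nonneg_right _ (abs_nonneg _)
          exact mul_le_mul_of_nonneg_left hi1 hmw
      _ = mw ϑ ω * |X - Y| := by ring
      _ ≤ mw ϑ ω * (|X - 1| + |Y - 1|) := mul_le_mul_of_nonneg_left habs hmw
      _ = mw ϑ ω * |X - 1| + mw ϑ ω * |Y - 1| := by ring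
  calc |∑ ω : Fin (m + 1) → D,
        (mw ϑ ω * ind A (hist ω) * (((hist ω a : ℕ) : ℝ) / (((m + 1 : ℕ) : ℝ) * ϑ a))
          - mw ϑ ω * ind A (hist ω) * (((hist ω b : ℕ) : ℝ) / (((m + 1 : ℕ) : ℝ) * ϑ b)))|
      ≤ ∑ ω : Fin (m + 1) → D,
        |mw ϑ ω * ind A (hist ω) * (((hist ω a : ℕ) : ℝ) / (((m + 1 : ℕ) : ℝ) * ϑ a))
          - mw ϑ ω * ind A (hist ω) * (((hist ω b : ℕ) : ℝ) / (((m + 1 : ℕ) : ℝ) * ϑ b))| :=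
        Finset.abs_sum_le_sum_abs _ _
    _ ≤ ∑ ω : Fin (m + 1) → D,
        (mw ϑ ω * |((hist ω a : ℕ) : ℝ) / (((m + 1 : ℕ) : ℝ) * ϑ a) - 1|
          + mw ϑ ω * |((hist ω b : ℕ) : ℝ) / (((m + 1 : ℕ) : ℝ) * ϑ b) - 1|) :=
        Finset.sum_le_sum fun ω _ => hstep ω
    _ = (∑ ω : Fin (m + 1) → D, mw ϑ ω * |((hist ω a : ℕ) : ℝ) / (((m + 1 : ℕ) : ℝ) * ϑ a) - 1|)
        + ∑ ω : Fin (m + 1) → D, mw ϑ ω * |((hist ω b : ℕ) : ℝ) / (((m + 1 : ℕ) : ℝ) * ϑ b) - 1| :=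
        Finset.sum_add_distrib
    _ ≤ 1 / Real.sqrt (((m + 1 : ℕ) : ℝ) * ϑ a) + 1 / Real.sqrt (((m + 1 : ℕ) : ℝ) * ϑ b) := by
        have da := dev h_nonneg h_sum (h_pos a) (Nat.succ_pos m)
        have db := dev h_nonneg h_sum (h_pos b) (Nat.succ_pos m)
        exact add_le_add da db

end Part4

namespace Part5
open MultiAux Part2 Part3 Part4

variable {D : Type*} [Fintype D] [DecidableEq D] [MeasurableSpace D]
  [MeasurableSingletonClass D] {ϑ : D → ℝ}

instance (w : D → ℝ) : IsFiniteMeasure (discMeasure w) := by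
  constructor
  unfold discMeasure
  rw [Measure.finset_sum_apply]
  refine ENNReal.sum_lt_top.2 fun y _ => ?_
  simp only [Measure.smul_apply, smul_eq_mul]
  exact ENNReal.mul_lt_top ENNReal.ofReal_lt_top (by simp [Measure.dirac_apply])

lemma discMeasure_singleton (y : D) : discMeasure ϑ {y} = ENNReal.ofReal (ϑ y) := by
  unfold discMeasure
  rw [Measure.finset_sum_apply]
  have : ∀ c : D, (ENNReal.ofReal (ϑ c) • Measure.dirac c) ({y} : Set D)
      = if c = y then ENNReal.ofReal (ϑ c) else 0 := by
    intro c
    simp only [Measure.smul_apply, smul_eq_mul,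
      Measure.dirac_apply' _ (measurableSet_singleton y)]
    by_cases h : c = y <;> simp [Set.indicator_apply, h]
  rw [Finset.sum_congr rfl fun c _ => this c, Finset.sum_ite_eq' Finset.univ y]
  simp

lemma pi_singleton (h_nonneg : ∀ y, 0 ≤ ϑ y) {n : ℕ} (ω : Fin n → D) :
    (Measure.pi fun _ : Fin n => discMeasure ϑ) {ω} = ENNReal.ofReal (mw ϑ ω) := by
  rw [← Set.univ_pi_singleton ω, Measure.pi_pi]
  rw [Finset.prod_congr rfl fun i _ => discMeasure_singleton (ω i)]
  rw [← ENNReal.ofReal_prod_of_nonneg fun i _ => h_nonneg (ω i)]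
  rfl

open scoped Classical in
lemma pi_apply_toReal (h_nonneg : ∀ y, 0 ≤ ϑ y) {n : ℕ} (S : Set (Fin n → D)) :
    ((Measure.pi fun _ : Fin n => discMeasure ϑ) S).toReal
      = ∑ ω : Fin n → D, if ω ∈ S then mw ϑ ω else 0 := by
  have hS : S = ⋃ ω ∈ Finset.univ.filter (· ∈ S), ({ω} : Set (Fin n → D)) := by
    ext x; simp
  conv_lhs => rw [hS]
  rw [measure_biUnion_finset ?_ fun ω _ => measurableSet_singleton ω]
  · rw [Finset.sum_congr rfl fun ω _ => pi_singleton h_nonneg ω]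
    rw [← ENNReal.ofReal_sum_of_nonneg fun ω _ => mw_nonneg h_nonneg ω]
    rw [ENNReal.toReal_ofReal (Finset.sum_nonneg fun ω _ => mw_nonneg h_nonneg ω)]
    rw [Finset.sum_filter]
  · intro x _ y _ hxy
    simp [Set.disjoint_singleton, hxy]

open scoped Classical in
lemma map_shift_apply (h_nonneg : ∀ y, 0 ≤ ϑ y) (m : ℕ) (v : D → ℕ) (A : Set (D → ℕ)) :
    ((Measure.map (fun h => h + v) (multinomialLaw m ϑ)) A).toReal
      = ∑ ω : Fin m → D, mw ϑ ω * ind A (hist ω + v) := by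
  unfold multinomialLaw
  rw [Measure.map_map (measurable_of_countable _) (measurable_of_countable _)]
  rw [Measure.map_apply (measurable_of_countable _) (Set.to_countable A).measurableSet]
  rw [pi_apply_toReal h_nonneg]
  refine Finset.sum_congr rfl fun ω _ => ?_
  have hmem : ω ∈ (fun h => h + v) ∘ (fun ω : Fin m → D => ∑ i, Pi.single (ω i) 1) ⁻¹' A
      ↔ hist ω + v ∈ A := Iff.rfl
  by_cases h : hist ω + v ∈ A
  · rw [if_pos (hmem.2 h)]
    unfold ind
    rw [Set.indicator_of_mem h]
    simp
  · rw [if_neg (fun hh => h (hmem.1 hh))]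
    unfold ind
    rw [Set.indicator_of_notMem h]
    simp

end Part5

namespace Part6
open MultiAux Part2 Part3 Part4 Part5

variable {D : Type*} [Fintype D] [DecidableEq D] [MeasurableSpace D]
  [MeasurableSingletonClass D] {ϑ : D → ℝ}

lemma master (h_nonneg : ∀ y, 0 ≤ ϑ y) (h_sum : ∑ y, ϑ y = 1) (h_pos : ∀ y, 0 < ϑ y)
    (m : ℕ) (a b : D) (u : D → ℕ) (A : Set (D → ℕ)) :
    |((Measure.map (fun h => h + (u + Pi.single a 1)) (multinomialLaw m ϑ)) A).toReal
      - ((Measure.map (fun h => h + (u + Pi.single b 1)) (multinomialLaw m ϑ)) A).toReal|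
      ≤ (1 / Real.sqrt (ϑ a) + 1 / Real.sqrt (ϑ b)) / Real.sqrt ((m : ℝ) + 1) := by
  set A' : Set (D → ℕ) := (fun h => h + u) ⁻¹' A with hA'
  have hind : ∀ (c : D) (ω : Fin m → D),
      ind A (hist ω + (u + Pi.single c 1)) = ind A' (hist ω + Pi.single c 1) := by
    intro c ω
    have hv : hist ω + (u + Pi.single c 1) = (hist ω + Pi.single c 1) + u := by abel
    have : (hist ω + Pi.single c 1) ∈ A' ↔ (hist ω + (u + Pi.single c 1)) ∈ A := by
      rw [hA', Set.mem_preimage, hv]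
    unfold ind
    by_cases h : hist ω + (u + Pi.single c 1) ∈ A
    · rw [Set.indicator_of_mem h, Set.indicator_of_mem (this.2 h)]
      rfl
    · rw [Set.indicator_of_notMem h, Set.indicator_of_notMem (fun hh => h (this.1 hh))]
  rw [map_shift_apply h_nonneg m _ A, map_shift_apply h_nonneg m _ A]
  simp only [hind]
  have hcore := core h_nonneg h_sum h_pos m a b A'
  have hm1 : ((m + 1 : ℕ) : ℝ) = (m : ℝ) + 1 := by push_cast; ring
  have hs : ∀ c : D, Real.sqrt (((m + 1 : ℕ) : ℝ) * ϑ c)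
      = Real.sqrt ((m : ℝ) + 1) * Real.sqrt (ϑ c) := by
    intro c
    rw [hm1, Real.sqrt_mul (by positivity)]
  have hsqpos : 0 < Real.sqrt ((m : ℝ) + 1) := Real.sqrt_pos.2 (by positivity)
  have hsa : 0 < Real.sqrt (ϑ a) := Real.sqrt_pos.2 (h_pos a)
  have hsb : 0 < Real.sqrt (ϑ b) := Real.sqrt_pos.2 (h_pos b)
  calc |(∑ ω : Fin m → D, mw ϑ ω * ind A' (hist ω + Pi.single a 1))
        - ∑ ω : Fin m → D, mw ϑ ω * ind A' (hist ω + Pi.single b 1)|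
      ≤ 1 / Real.sqrt (((m + 1 : ℕ) : ℝ) * ϑ a)
        + 1 / Real.sqrt (((m + 1 : ℕ) : ℝ) * ϑ b) := hcore
    _ = (1 / Real.sqrt (ϑ a) + 1 / Real.sqrt (ϑ b)) / Real.sqrt ((m : ℝ) + 1) := by
        rw [hs a, hs b]
        field_simp

lemma one_div_sqrt_le (h_nonneg : ∀ y, 0 ≤ ϑ y) (c : D) :
    1 / Real.sqrt (ϑ c) ≤ ∑ y, 1 / Real.sqrt (ϑ y) :=
  Finset.single_le_sum (f := fun y => 1 / Real.sqrt (ϑ y))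
    (fun y _ => by positivity) (Finset.mem_univ c)

lemma chain (h_nonneg : ∀ y, 0 ≤ ϑ y) (h_sum : ∑ y, ϑ y = 1) (h_pos : ∀ y, 0 < ϑ y)
    (m : ℕ) :
    ∀ (r : ℕ) (AA BB : Fin r → D) (u : D → ℕ) (A : Set (D → ℕ)),
    |((Measure.map (fun h => h + (u + ∑ j, Pi.single (AA j) 1)) (multinomialLaw m ϑ)) A).toReal
      - ((Measure.map (fun h => h + (u + ∑ j, Pi.single (BB j) 1)) (multinomialLaw m ϑ)) A).toReal|
      ≤ (2 * ∑ y, 1 / Real.sqrt (ϑ y)) * r / Real.sqrt ((m : ℝ) + 1) := by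
  intro r
  induction r with
  | zero =>
    intro AA BB u A
    simp
  | succ r ih =>
    intro AA BB u A
    have hsqpos : 0 < Real.sqrt ((m : ℝ) + 1) := Real.sqrt_pos.2 (by positivity)
    set a : D := AA (Fin.last r)
    set b : D := BB (Fin.last r)
    set SA : D → ℕ := ∑ j : Fin r, Pi.single (AA (Fin.castSucc j)) 1 with hSA
    set SB : D → ℕ := ∑ j : Fin r, Pi.single (BB (Fin.castSucc j)) 1 with hSB
    have hA : u + ∑ j : Fin (r+1), Pi.single (AA j) 1 = (u + SA) + Pi.single a 1 := by
      rw [hSA, Fin.sum_univ_castSucc]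
      abel
    have hB : u + ∑ j : Fin (r+1), Pi.single (BB j) 1 = (u + Pi.single b 1) + SB := by
      rw [hSB, Fin.sum_univ_castSucc]
      abel
    have hmid : (u + SA) + Pi.single b 1 = (u + Pi.single b 1) + SA := by abel
    have h1 := master h_nonneg h_sum h_pos m a b (u + SA) A
    have h2 := ih (fun j => AA (Fin.castSucc j)) (fun j => BB (Fin.castSucc j))
      (u + Pi.single b 1) A
    rw [hA, hB]
    have key1 : |((Measure.map (fun h => h + ((u + SA) + Pi.single a 1)) (multinomialLaw m ϑ)) A).toReal
        - ((Measure.map (fun h => h + ((u + Pi.single b 1) + SB)) (multinomialLaw m ϑ)) A).toReal|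
        ≤ |((Measure.map (fun h => h + ((u + SA) + Pi.single a 1)) (multinomialLaw m ϑ)) A).toReal
            - ((Measure.map (fun h => h + ((u + SA) + Pi.single b 1)) (multinomialLaw m ϑ)) A).toReal|
          + |((Measure.map (fun h => h + ((u + SA) + Pi.single b 1)) (multinomialLaw m ϑ)) A).toReal
            - ((Measure.map (fun h => h + ((u + Pi.single b 1) + SB)) (multinomialLaw m ϑ)) A).toReal| :=
      abs_sub_le _ _ _
    have h2' : |((Measure.map (fun h => h + ((u + SA) + Pi.single b 1)) (multinomialLaw m ϑ)) A).toReal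
        - ((Measure.map (fun h => h + ((u + Pi.single b 1) + SB)) (multinomialLaw m ϑ)) A).toReal|
        ≤ (2 * ∑ y, 1 / Real.sqrt (ϑ y)) * r / Real.sqrt ((m : ℝ) + 1) := by
      rw [hmid]
      exact h2
    have hC : 1 / Real.sqrt (ϑ a) + 1 / Real.sqrt (ϑ b) ≤ 2 * ∑ y, 1 / Real.sqrt (ϑ y) := by
      have := one_div_sqrt_le (ϑ := ϑ) h_nonneg a
      have := one_div_sqrt_le (ϑ := ϑ) h_nonneg b
      linarith [one_div_sqrt_le (ϑ := ϑ) h_nonneg a, one_div_sqrt_le (ϑ := ϑ) h_nonneg b]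
    calc _ ≤ _ := key1
      _ ≤ (1 / Real.sqrt (ϑ a) + 1 / Real.sqrt (ϑ b)) / Real.sqrt ((m : ℝ) + 1)
          + (2 * ∑ y, 1 / Real.sqrt (ϑ y)) * r / Real.sqrt ((m : ℝ) + 1) :=
        add_le_add h1 h2'
      _ ≤ (2 * ∑ y, 1 / Real.sqrt (ϑ y)) / Real.sqrt ((m : ℝ) + 1)
          + (2 * ∑ y, 1 / Real.sqrt (ϑ y)) * r / Real.sqrt ((m : ℝ) + 1) := by
        gcongr
      _ = (2 * ∑ y, 1 / Real.sqrt (ϑ y)) * (r + 1) / Real.sqrt ((m : ℝ) + 1) := by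
        field_simp
        ring
      _ = (2 * ∑ y, 1 / Real.sqrt (ϑ y)) * ((r : ℕ) + 1 : ℕ) / Real.sqrt ((m : ℝ) + 1) := by
        push_cast
        ring

lemma tvDist_le_of {X : Type*} [MeasurableSpace X] {μ ν : Measure X} {c : ℝ}
    (h : ∀ A : Set X, |(μ A).toReal - (ν A).toReal| ≤ c) : tvDist μ ν ≤ c := by
  have : Nonempty {A : Set X // MeasurableSet A} := ⟨⟨∅, MeasurableSet.empty⟩⟩
  exact ciSup_le fun A => h A.1

end Part6

/-- Multinomial edge-shift bound (Lemma A.5): if `ϑ` has full support, there is a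
constant `C = C(ϑ)` such that shifting a `Multinomial(m,ϑ)` histogram by one category
vector versus another costs at most `C/√(m+1)` in total variation, and shifting by `r`
category vectors versus `r` others costs at most `C·r/√(m+1)`, uniformly in `m`, `r`
and the chosen categories. -/
theorem multinomial_edge_shift
    {D : Type*} [Fintype D] [DecidableEq D]
    [MeasurableSpace D] [MeasurableSingletonClass D]
    (ϑ : D → ℝ) (h_nonneg : ∀ y, 0 ≤ ϑ y) (h_sum : ∑ y, ϑ y = 1)
    (h_pos : ∀ y, 0 < ϑ y) :
    ∃ C : ℝ, 0 ≤ C ∧ ∀ m : ℕ,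
      (∀ a b : D,
        tvDist (Measure.map (fun h => h + Pi.single a 1) (multinomialLaw m ϑ))
          (Measure.map (fun h => h + Pi.single b 1) (multinomialLaw m ϑ)) ≤
        C / Real.sqrt (m + 1)) ∧
      (∀ r : ℕ, 1 ≤ r → ∀ A B : Fin r → D,
        tvDist
          (Measure.map (fun h => h + ∑ j, Pi.single (A j) 1) (multinomialLaw m ϑ))
          (Measure.map (fun h => h + ∑ j, Pi.single (B j) 1) (multinomialLaw m ϑ)) ≤
        C * r / Real.sqrt (m + 1)) := by
  classical
  refine ⟨2 * ∑ y, 1 / Real.sqrt (ϑ y), by positivity, fun m => ⟨?_, ?_⟩⟩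
  · intro a b
    refine Part6.tvDist_le_of fun A => ?_
    have h1 := Part6.master h_nonneg h_sum h_pos m a b 0 A
    simp only [zero_add] at h1
    refine h1.trans ?_
    have hC := Part6.one_div_sqrt_le (ϑ := ϑ) h_nonneg a
    have hC' := Part6.one_div_sqrt_le (ϑ := ϑ) h_nonneg b
    have hs : (0:ℝ) < Real.sqrt ((m : ℝ) + 1) := Real.sqrt_pos.2 (by positivity)
    exact (div_le_div_iff_of_pos_right hs).2 (by linarith)
  · intro r hr A B
    refine Part6.tvDist_le_of fun S => ?_
    have h1 := Part6.chain h_nonneg h_sum h_pos m r A B 0 S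
    simp only [zero_add] at h1
    exact h1
end
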